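/- Let n ≥ 3 and k ≥ 1, and let (x, c, u) be a combinatorial degenerated magic polygon D(n,k). Then the sum of the labels at all non-root vertices of all k polygons, S₁ = ∑_{i=0}^{n−2} ∑_{t : Fin k} x t (i·k), equals (n−1)·k·(k²·(n−2)+k+2)/2, i.e. S₁ = (n−1)·(u − c). -/

import Mathlib

open Fin.NatCast

/-- The labeling function of a combinatorial degenerated magic polygon `D(n,k)`:
the labels `x t p` of the points on the `k` polygons (root vertex excluded)
together with the root label `c`. -/
def degMagicLabels (n k : ℕ) (x : Fin k → Fin (k * (n - 2) + 1) → ℕ) (c : ℕ) :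
    (Fin k × Fin (k * (n - 2) + 1)) ⊕ Unit → ℕ :=
  Sum.elim (fun q => x q.1 q.2) (fun _ => c)

/-- `(x, c, u)` is a combinatorial degenerated magic polygon `D(n,k)`:
(1) the `k²(n−2)+k+1` labels are exactly `1, …, k²(n−2)+k+1`, each occurring once;
(2) every edge sum `∑_{j=0}^{k} x t (i·k + j)`, for an edge not adjacent to the
root (`0 ≤ i ≤ n−3`), equals `u`;
(3) for every position `p`, the sum `(∑ t, x t p) + c` along the segment joining
the root vertex to the boundary of the largest polygon equals `u`. -/
def IsDegMagicPolygon (n k : ℕ) (x : Fin k → Fin (k * (n - 2) + 1) → ℕ) (c u : ℕ) : Prop :=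
  Function.Injective (degMagicLabels n k x c) ∧
  Set.range (degMagicLabels n k x c) = Set.Icc 1 (k ^ 2 * (n - 2) + k + 1) ∧
  (∀ t : Fin k, ∀ i ∈ Finset.range (n - 2),
    ∑ j ∈ Finset.range (k + 1), x t ((i * k + j : ℕ)) = u) ∧
  (∀ p : Fin (k * (n - 2) + 1), (∑ t : Fin k, x t p) + c = u)

/-!
The labels on each segment from the root, the root excluded, sum to `D = u - c`.
Adding up the `n - 2` edge sums of one polygon counts each of its labels once and the labels at its interior
vertices once more; summed over the `k` polygons this reads
`k (n-2) u + 2D = (k (n-2) + 1) D + (n-1) D`, and with `u = D + c` it forces `D = k c`.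
The sum of all labels, `(k (n-2) + 1) D + c = N c` with `N = k² (n-2) + k + 1`, is also
`N (N+1) / 2`, so `2c = N + 1`; the vertex sum is `(n-1) D = (n-1) k (N+1) / 2`.
-/

open Finset

theorem Finset.sum_Icc_one_id_mul_two (N : ℕ) : (∑ m ∈ Icc 1 N, m) * 2 = N * (N + 1) := by
  induction N with
  | zero => simp
  | succ N ih => rw [sum_Icc_succ_top (by omega), add_mul, ih]; ring

theorem Fintype.sum_eq_sum_Icc_of_injective {α : Type*} [Fintype α] {f : α → ℕ}
    (hf : Function.Injective f) {a b : ℕ} (hrange : Set.range f = Set.Icc a b) :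
    ∑ q, f q = ∑ m ∈ Icc a b, m := by
  have himage : univ.image f = Icc a b := by
    apply coe_injective
    rw [coe_image, coe_univ, Set.image_univ, hrange, coe_Icc]
  rw [← himage, sum_image fun _ _ _ _ h => hf h]

theorem sum_edges_add_endpoints (f : ℕ → ℕ) (k a : ℕ) :
    ∑ i ∈ range a, ∑ j ∈ range (k + 1), f (i * k + j) + f 0 + f (a * k) =
      ∑ m ∈ range (a * k + 1), f m + ∑ i ∈ range (a + 1), f (i * k) := by
  induction a with
  | zero => simp
  | succ a ih =>
    have hpath : ∑ m ∈ range ((a + 1) * k + 1), f m =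
        ∑ m ∈ range (a * k + 1), f m + ∑ j ∈ range k, f (a * k + (j + 1)) := by
      rw [show (a + 1) * k + 1 = a * k + 1 + k by ring, sum_range_add]
      simp only [add_assoc, add_comm 1]
    rw [sum_range_succ, sum_range_succ' _ k, sum_range_succ _ (a + 1), hpath]
    simp only [add_zero]
    omega

namespace IsDegMagicPolygon

variable {n k : ℕ} {x : Fin k → Fin (k * (n - 2) + 1) → ℕ} {c u : ℕ}

theorem sum_labels_mul_two (h : IsDegMagicPolygon n k x c u) :
    (∑ t, ∑ p, x t p + c) * 2 = (k ^ 2 * (n - 2) + k + 1) * (k ^ 2 * (n - 2) + k + 2) := by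
  have htotal := Fintype.sum_eq_sum_Icc_of_injective h.1 h.2.1
  simp only [degMagicLabels, Fintype.sum_sum_type, Fintype.sum_prod_type, Sum.elim_inl,
    Sum.elim_inr, univ_unique, sum_singleton] at htotal
  rw [htotal, sum_Icc_one_id_mul_two]

theorem sum_column (h : IsDegMagicPolygon n k x c u) (p : Fin (k * (n - 2) + 1)) :
    ∑ t, x t p = u - c := by
  have := h.2.2.2 p
  omega

theorem sum_row_add_sum_vertices (h : IsDegMagicPolygon n k x c u) (hn : 2 ≤ n) (t : Fin k) :
    (n - 2) * u + x t 0 + x t ((n - 2) * k : ℕ) =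
      ∑ p, x t p + ∑ i ∈ range (n - 1), x t (i * k : ℕ) := by
  have hedges := sum_edges_add_endpoints (fun m => x t m) k (n - 2)
  rw [sum_congr rfl (h.2.2.1 t), sum_const, card_range, smul_eq_mul,
    show n - 2 + 1 = n - 1 by omega] at hedges
  have hrow : ∑ p, x t p = ∑ m ∈ range ((n - 2) * k + 1), x t m := by
    calc ∑ p, x t p = ∑ p : Fin (k * (n - 2) + 1), x t ((p : ℕ) : Fin _) := by
          simp only [Fin.cast_val_eq_self]
      _ = ∑ m ∈ range (k * (n - 2) + 1), x t m := Fin.sum_univ_eq_sum_range (fun m => x t m) _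
      _ = ∑ m ∈ range ((n - 2) * k + 1), x t m := sum_congr (by rw [Nat.mul_comm]) fun _ _ => rfl
  rw [hrow, ← hedges, Nat.cast_zero]

theorem sum_labels_eq (h : IsDegMagicPolygon n k x c u) :
    ∑ t, ∑ p, x t p = (k * (n - 2) + 1) * (u - c) := by
  rw [sum_comm, sum_congr rfl fun p _ => h.sum_column p, sum_const, card_univ,
    Fintype.card_fin, smul_eq_mul]

theorem sum_vertex_labels_eq (h : IsDegMagicPolygon n k x c u) :
    ∑ i ∈ range (n - 1), ∑ t, x t (i * k : ℕ) = (n - 1) * (u - c) := by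
  rw [sum_congr rfl fun i _ => h.sum_column _, sum_const, card_range, smul_eq_mul]

theorem sub_root_eq_mul_root (h : IsDegMagicPolygon n k x c u) (hn : 3 ≤ n) :
    u - c = k * c := by
  have hrows : k * ((n - 2) * u) + (u - c) + (u - c) =
      (k * (n - 2) + 1) * (u - c) + (n - 1) * (u - c) := by
    have := sum_congr rfl fun t (_ : t ∈ univ) => h.sum_row_add_sum_vertices (by omega) t
    simp only [sum_add_distrib, sum_const, card_univ, Fintype.card_fin, smul_eq_mul] at this
    rwa [h.sum_column, h.sum_column, h.sum_labels_eq, sum_comm, h.sum_vertex_labels_eq] at this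
  have hcu : c ≤ u := by have := h.2.2.2 0; omega
  obtain ⟨a, rfl⟩ : ∃ a, n = a + 3 := ⟨n - 3, by omega⟩
  obtain ⟨d, rfl⟩ : ∃ d, u = c + d := ⟨u - c, by omega⟩
  simp only [Nat.add_sub_cancel_left, show a + 3 - 2 = a + 1 by omega,
    show a + 3 - 1 = a + 2 by omega] at hrows ⊢
  refine Nat.eq_of_mul_eq_mul_left (Nat.succ_pos a) ?_
  linarith

theorem two_mul_root (h : IsDegMagicPolygon n k x c u) (hn : 3 ≤ n) :
    2 * c = k ^ 2 * (n - 2) + k + 2 := by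
  have htotal := h.sum_labels_mul_two
  rw [h.sum_labels_eq, h.sub_root_eq_mul_root hn] at htotal
  refine Nat.eq_of_mul_eq_mul_left (by positivity : 0 < k ^ 2 * (n - 2) + k + 1) ?_
  rw [← htotal]
  ring

end IsDegMagicPolygon

theorem degMagicPolygon_vertexSum_general (n k : ℕ) (hn : 3 ≤ n)
    (x : Fin k → Fin (k * (n - 2) + 1) → ℕ) (c u : ℕ)
    (h : IsDegMagicPolygon n k x c u) :
    ∑ i ∈ Finset.range (n - 1), ∑ t : Fin k, x t ((i * k : ℕ)) =
        (n - 1) * k * (k ^ 2 * (n - 2) + k + 2) / 2 ∧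
    ∑ i ∈ Finset.range (n - 1), ∑ t : Fin k, x t ((i * k : ℕ)) = (n - 1) * (u - c) := by
  refine ⟨?_, h.sum_vertex_labels_eq⟩
  rw [h.sum_vertex_labels_eq, h.sub_root_eq_mul_root hn, ← h.two_mul_root hn,
    show (n - 1) * k * (2 * c) = (n - 1) * (k * c) * 2 by ring, Nat.mul_div_cancel _ two_pos]

theorem degMagicPolygon_vertexSum (n k : ℕ) (hn : 3 ≤ n) (hk : 1 ≤ k)
    (x : Fin k → Fin (k * (n - 2) + 1) → ℕ) (c u : ℕ)
    (h : IsDegMagicPolygon n k x c u) :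
    ∑ i ∈ Finset.range (n - 1), ∑ t : Fin k, x t ((i * k : ℕ)) =
        (n - 1) * k * (k ^ 2 * (n - 2) + k + 2) / 2 ∧
    ∑ i ∈ Finset.range (n - 1), ∑ t : Fin k, x t ((i * k : ℕ)) = (n - 1) * (u - c) :=
  degMagicPolygon_vertexSum_general n k hn x c u h
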